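/- Let C be a cocomplete category. The left adjoint (σ_a)_!: Fun((Δ_a × Δ_a)ᵒᵖ, C) → Fun(Δ_aᵒᵖ, C) of the restriction functor (σ_a)* along the ordinal sum is given levelwise on an object A by ((σ_a)_!A)_k ≅ ∐_{i=−1}^{k} A_{i, k−i−1}; for a morphism β: [l] → [k] in Δ_a, the induced structure map acts on the i-th summand A_{i,k−i−1} as the structure map of A induced by the unique pair (β₁: [j_β(i)] → [i], β₂: [l−j_β(i)−1] → [k−i−1]) with σ_a(β₁, β₂) = β, landing in the j_β(i)-th summand A_{j_β(i), l−j_β(i)−1}. -/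

import Mathlib

open CategoryTheory CategoryTheory.Limits Simplicial Opposite

universe v u

namespace OrdSum

/-- The "ordinal sum" of two monotone maps between finite linear orders. -/
def ordJoin {m n m' n' : ℕ} (f : Fin m →o Fin m') (g : Fin n →o Fin n') :
    Fin (m + n) →o Fin (m' + n') where
  toFun i :=
    if h : (i : ℕ) < m then Fin.castAdd n' (f ⟨i, h⟩)
    else Fin.natAdd m' (g ⟨(i : ℕ) - m, by omega⟩)
  monotone' := by
    intro i j hij
    have hij' : (i : ℕ) ≤ (j : ℕ) := hij
    dsimp only
    by_cases hi : (i : ℕ) < m <;> by_cases hj : (j : ℕ) < m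
    · simp only [dif_pos hi, dif_pos hj, Fin.le_def, Fin.coe_castAdd]
      exact f.monotone (show (⟨(i:ℕ), hi⟩ : Fin m) ≤ ⟨(j:ℕ), hj⟩ from hij')
    · simp only [dif_pos hi, dif_neg hj, Fin.le_def, Fin.coe_castAdd, Fin.coe_natAdd]
      have := (f ⟨(i:ℕ), hi⟩).isLt
      omega
    · omega
    · simp only [dif_neg hi, dif_neg hj, Fin.le_def, Fin.coe_natAdd]
      have : (⟨(i:ℕ) - m, by omega⟩ : Fin n) ≤ ⟨(j:ℕ) - m, by omega⟩ := by
        simp only [Fin.mk_le_mk]; omega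
      have := g.monotone this
      omega

theorem ordJoin_id (m n : ℕ) :
    ordJoin (OrderHom.id (α := Fin m)) (OrderHom.id (α := Fin n)) = OrderHom.id := by
  ext i
  simp only [ordJoin, OrderHom.coe_mk, OrderHom.id_coe, id_eq]
  by_cases h : (i : ℕ) < m
  · simp [dif_pos h]
  · simp only [dif_neg h, Fin.coe_natAdd]
    omega

theorem ordJoin_comp {m n m' n' m'' n'' : ℕ}
    (f : Fin m →o Fin m') (g : Fin n →o Fin n')
    (f' : Fin m' →o Fin m'') (g' : Fin n' →o Fin n'') :
    ordJoin (f'.comp f) (g'.comp g) = (ordJoin f' g').comp (ordJoin f g) := by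
  ext i
  have e1 : ∀ {a b a' b' : ℕ} (F : Fin a →o Fin a') (G : Fin b →o Fin b') (x : Fin (a + b)),
      ordJoin F G x = if h : (x : ℕ) < a then Fin.castAdd b' (F ⟨x, h⟩)
        else Fin.natAdd a' (G ⟨(x : ℕ) - a, by omega⟩) := fun _ _ _ => rfl
  simp only [e1, OrderHom.comp_coe, Function.comp_apply]
  by_cases h : (i : ℕ) < m
  · have h1 : ((Fin.castAdd n' (f ⟨(i:ℕ), h⟩)) : ℕ) < m' := (f ⟨(i:ℕ), h⟩).isLt
    simp only [dif_pos h, dif_pos h1]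
    congr 1
  · have h1 : ¬ ((Fin.natAdd m' (g ⟨(i:ℕ) - m, by omega⟩)) : ℕ) < m' := by
      simp only [Fin.coe_natAdd]; omega
    simp only [dif_neg h]
    rw [dif_neg h1]
    simp only [OrderHom.comp_coe, Function.comp_apply, Fin.coe_natAdd, Nat.add_right_cancel_iff]
    congr 2
    apply Fin.ext
    simp

/-- The ordinal sum functor `σ : Δ × Δ → Δ`, `([k],[l]) ↦ [k+1+l]`. -/
def ordSum : SimplexCategory × SimplexCategory ⥤ SimplexCategory where
  obj x := SimplexCategory.mk (x.1.len + 1 + x.2.len)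
  map {x y} f := SimplexCategory.Hom.mk
    (ordJoin (m := x.1.len + 1) (n := x.2.len + 1) (m' := y.1.len + 1) (n' := y.2.len + 1)
      f.1.toOrderHom f.2.toOrderHom)
  map_id x := by
    apply SimplexCategory.Hom.ext
    simp only [SimplexCategory.Hom.toOrderHom_mk]
    exact ordJoin_id _ _
  map_comp {x y z} f g := by
    apply SimplexCategory.Hom.ext
    simp only [SimplexCategory.Hom.toOrderHom_mk]
    exact ordJoin_comp _ _ _ _

/-- The augmented simplex category `Δₐ`: the object `⟨n⟩` is the linear order with `n`
elements (so `⟨0⟩` is `[-1] = ∅` and `⟨n+1⟩` is `[n]`); morphisms are monotone maps. -/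
@[ext] structure AugSimplex where
  len : ℕ

instance : Category.{0} AugSimplex where
  Hom a b := Fin a.len →o Fin b.len
  id _ := OrderHom.id
  comp f g := g.comp f

/-- The inclusion `ι : Δ → Δₐ`. -/
def incl : SimplexCategory ⥤ AugSimplex where
  obj x := ⟨x.len + 1⟩
  map f := f.toOrderHom
  map_id _ := rfl
  map_comp _ _ := rfl

/-- The ordinal sum functor `σₐ : Δₐ × Δₐ → Δₐ`. -/
def ordSumAug : AugSimplex × AugSimplex ⥤ AugSimplex where
  obj x := ⟨x.1.len + x.2.len⟩
  map f := ordJoin f.1 f.2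
  map_id _ := ordJoin_id _ _
  map_comp _ _ := ordJoin_comp _ _ _ _

variable {C : Type u} [Category.{v} C]

variable (C) in
/-- Total décalage `σ* : Fun(Δᵒᵖ, C) ⥤ Fun((Δ×Δ)ᵒᵖ, C)`, precomposition with ordinal sum. -/
def decF : (SimplexCategoryᵒᵖ ⥤ C) ⥤ ((SimplexCategory × SimplexCategory)ᵒᵖ ⥤ C) :=
  (Functor.whiskeringLeft _ _ C).obj ordSum.op

variable (C) in
/-- The functor sending a bisimplicial object `Y` to `[k] ↦ Y_{k,−}`. -/
def rowsF : ((SimplexCategory × SimplexCategory)ᵒᵖ ⥤ C) ⥤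
    (SimplexCategoryᵒᵖ ⥤ (SimplexCategoryᵒᵖ ⥤ C)) :=
  (Functor.whiskeringLeft _ _ C).obj
    (prodOpEquiv (C := SimplexCategory) (D := SimplexCategory)).inverse ⋙ Functor.curry

variable (C) in
/-- The functor sending a bisimplicial object `Y` to `[k] ↦ Y_{−,k}`. -/
def colsF : ((SimplexCategory × SimplexCategory)ᵒᵖ ⥤ C) ⥤
    (SimplexCategoryᵒᵖ ⥤ (SimplexCategoryᵒᵖ ⥤ C)) :=
  (Functor.whiskeringLeft _ _ C).obj
    (CategoryTheory.Prod.swap SimplexCategoryᵒᵖ SimplexCategoryᵒᵖ ⋙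
      (prodOpEquiv (C := SimplexCategory) (D := SimplexCategory)).inverse) ⋙ Functor.curry

/-- The simplicial object `Y_{k,−}`. -/
def rowS (Y : (SimplexCategory × SimplexCategory)ᵒᵖ ⥤ C) (k : SimplexCategory) :
    SimplexCategoryᵒᵖ ⥤ C :=
  ((rowsF C).obj Y).obj (op k)

/-- The simplicial object `Y_{−,k}`. -/
def colS (Y : (SimplexCategory × SimplexCategory)ᵒᵖ ⥤ C) (k : SimplexCategory) :
    SimplexCategoryᵒᵖ ⥤ C :=
  ((colsF C).obj Y).obj (op k)

/-- `π₀` of a simplicial object: the coequalizer of the two face maps `X₁ ⇉ X₀`. -/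
noncomputable def pi0F [HasCoequalizers C] : (SimplexCategoryᵒᵖ ⥤ C) ⥤ C where
  obj X := coequalizer (X.map (SimplexCategory.δ (1 : Fin 2)).op)
    (X.map (SimplexCategory.δ (0 : Fin 2)).op)
  map {X Y} f := coequalizer.desc (f.app (op ⦋0⦌) ≫ coequalizer.π _ _) (by
    rw [← Category.assoc, ← Category.assoc, f.naturality, f.naturality,
      Category.assoc, Category.assoc, coequalizer.condition])
  map_id X := by
    apply coequalizer.hom_ext
    simp
  map_comp f g := by
    apply coequalizer.hom_ext
    simp

/-- The canonical quotient map `X₀ → π₀(X)`. -/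
noncomputable def pi0π [HasCoequalizers C] (X : SimplexCategoryᵒᵖ ⥤ C) :
    X.obj (op ⦋0⦌) ⟶ pi0F.obj X :=
  coequalizer.π _ _

variable (C) in
/-- `Y ↦ ([k] ↦ π₀(Y_{k,−}))`. -/
noncomputable def rowsPi0F [HasCoequalizers C] :
    ((SimplexCategory × SimplexCategory)ᵒᵖ ⥤ C) ⥤ (SimplexCategoryᵒᵖ ⥤ C) :=
  rowsF C ⋙ (Functor.whiskeringRight _ _ _).obj pi0F

variable (C) in
/-- `Y ↦ ([k] ↦ π₀(Y_{−,k}))`. -/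
noncomputable def colsPi0F [HasCoequalizers C] :
    ((SimplexCategory × SimplexCategory)ᵒᵖ ⥤ C) ⥤ (SimplexCategoryᵒᵖ ⥤ C) :=
  colsF C ⋙ (Functor.whiskeringRight _ _ _).obj pi0F

variable (C) in
/-- The levelwise tensor `X ⊗ K` of a simplicial object with a simplicial set,
`(X ⊗ K)ₖ = ∐_{Kₖ} Xₖ`, as a functor in `X`. -/
noncomputable def tensorF [HasColimits C] (K : SSet.{v}) :
    (SimplexCategoryᵒᵖ ⥤ C) ⥤ (SimplexCategoryᵒᵖ ⥤ C) where
  obj X :=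
    { obj := fun n => ∐ (fun (_ : K.obj n) => X.obj n)
      map := fun {n m} f => Sigma.desc
        (fun s => X.map f ≫ Sigma.ι (fun (_ : K.obj m) => X.obj m) (K.map f s))
      map_id := fun n => by
        apply Sigma.hom_ext
        intro s
        simp [FunctorToTypes.map_id_apply]
      map_comp := fun {n m l} f g => by
        apply Sigma.hom_ext
        intro s
        simp [FunctorToTypes.map_comp_apply] }
  map {X Y} f :=
    { app := fun n => Limits.Sigma.desc
        (fun (s : K.obj n) => f.app n ≫ Sigma.ι (fun (_ : K.obj n) => Y.obj n) s)
      naturality := fun {n m} g => by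
        apply Sigma.hom_ext
        intro s
        simp }
  map_id X := by
    ext n : 2
    simp
  map_comp f g := by
    ext n : 2
    simp

variable (C) in
/-- The canonical projection `X ⊗ K ⟶ X`, induced by `K ⟶ Δ[0]`. -/
noncomputable def tensorProj [HasColimits C] (K : SSet.{v}) :
    tensorF C K ⟶ 𝟭 (SimplexCategoryᵒᵖ ⥤ C) where
  app X :=
    { app := fun n => Sigma.desc (fun _ => 𝟙 (X.obj n))
      naturality := fun {n m} g => by
        apply Sigma.hom_ext
        intro s
        simp [tensorF] }
  naturality {X Y} f := by
    ext n : 2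
    apply Sigma.hom_ext
    intro s
    simp [tensorF]



/-- The splitting index: `sigmaIdx β p` is the number of elements `j` of the source with
`β j < p`; equivalently `j_β + 1` where `j_β` is the largest index landing in the first block. -/
def sigmaIdx {m n : ℕ} (β : Fin m →o Fin n) (p : ℕ) : ℕ :=
  (Finset.univ.filter fun j : Fin m => ((β j) : ℕ) < p).card

theorem sigmaIdx_le {m n : ℕ} (β : Fin m →o Fin n) (p : ℕ) : sigmaIdx β p ≤ m := by
  classical
  exact le_trans (Finset.card_filter_le _ _) (by simp)

theorem lt_sigmaIdx_iff {m n : ℕ} (β : Fin m →o Fin n) (p : ℕ) (j : Fin m) :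
    (j : ℕ) < sigmaIdx β p ↔ ((β j) : ℕ) < p := by
  classical
  constructor
  · intro h
    by_contra hb
    push_neg at hb
    have hsub : (Finset.univ.filter fun j' : Fin m => ((β j') : ℕ) < p) ⊆ Finset.Iio j := by
      intro x hx
      simp only [Finset.mem_filter, Finset.mem_univ, true_and] at hx
      simp only [Finset.mem_Iio]
      by_contra hxj
      push_neg at hxj
      have hmono := β.monotone hxj
      rw [Fin.le_def] at hmono
      omega
    have hc := Finset.card_le_card hsub
    rw [Fin.card_Iio] at hc
    exact absurd h (by unfold sigmaIdx; omega)
  · intro h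
    have hsub : Finset.Iic j ⊆ (Finset.univ.filter fun j' : Fin m => ((β j') : ℕ) < p) := by
      intro x hx
      simp only [Finset.mem_Iic] at hx
      simp only [Finset.mem_filter, Finset.mem_univ, true_and]
      have hmono := β.monotone hx
      rw [Fin.le_def] at hmono
      omega
    have hc := Finset.card_le_card hsub
    rw [Fin.card_Iic] at hc
    unfold sigmaIdx
    omega

/-- The first component of the splitting of `β` at `p`. -/
def splitFst {m n : ℕ} (β : Fin m →o Fin n) (p : ℕ) : Fin (sigmaIdx β p) →o Fin p where
  toFun r := ⟨((β ⟨r.val, lt_of_lt_of_le r.2 (sigmaIdx_le β p)⟩) : ℕ),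
    (lt_sigmaIdx_iff β p _).mp r.2⟩
  monotone' := by
    intro a b hab
    have h := β.monotone (show (⟨a.val, lt_of_lt_of_le a.2 (sigmaIdx_le β p)⟩ : Fin m) ≤
      ⟨b.val, lt_of_lt_of_le b.2 (sigmaIdx_le β p)⟩ from hab)
    exact h

/-- The second component of the splitting of `β` at `p`. -/
def splitSnd {m n : ℕ} (β : Fin m →o Fin n) (p : ℕ) (hp : p ≤ n) :
    Fin (m - sigmaIdx β p) →o Fin (n - p) where
  toFun r := ⟨((β ⟨sigmaIdx β p + r.val, by have := r.2; omega⟩) : ℕ) - p, by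
    have h1 := (β ⟨sigmaIdx β p + r.val, by have := r.2; omega⟩).2
    have h2 : ¬ ((sigmaIdx β p + r.val) < sigmaIdx β p) := by omega
    have h3 := (lt_sigmaIdx_iff β p ⟨sigmaIdx β p + r.val, by have := r.2; omega⟩).not.mp
      (by simpa using h2)
    simp only [not_lt] at h3
    omega⟩
  monotone' := by
    intro a b hab
    have hav : a.val ≤ b.val := hab
    dsimp only
    simp only [Fin.mk_le_mk]
    apply Nat.sub_le_sub_right
    exact β.monotone (Fin.mk_le_mk.mpr (by omega))


variable {C : Type u} [Category.{v} C]

/-- The `p`-th summand `A_{p-1, b.len-p-1}` of the value of `(σₐ)_!A` at `b`. -/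
def sigmaAugSummand [HasColimits C] (A : (AugSimplex × AugSimplex)ᵒᵖ ⥤ C) (b : AugSimplex)
    (p : Fin (b.len + 1)) : C :=
  A.obj (op ((⟨p.val⟩ : AugSimplex), (⟨b.len - p.val⟩ : AugSimplex)))

/-- The matrix of the structure map of `(σₐ)_!A` induced by `β : a ⟶ b`: on the `p`-th summand
it is the structure map of `A` induced by the unique pair `(β₁, β₂)` with `σₐ(β₁, β₂) = β`,
landing in the `j_β(p)`-th summand. -/
noncomputable def sigmaAugMatrix [HasColimits C] (A : (AugSimplex × AugSimplex)ᵒᵖ ⥤ C)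
    {a b : AugSimplex} (β : a ⟶ b) :
    (∐ sigmaAugSummand A b) ⟶ (∐ sigmaAugSummand A a) :=
  Sigma.desc fun p =>
    A.map (Quiver.Hom.op
      ((splitFst (show Fin a.len →o Fin b.len from β) p.val,
        splitSnd (show Fin a.len →o Fin b.len from β) p.val (by have := p.2; omega)) :
        ((⟨sigmaIdx (show Fin a.len →o Fin b.len from β) p.val⟩ : AugSimplex),
          (⟨a.len - sigmaIdx (show Fin a.len →o Fin b.len from β) p.val⟩ : AugSimplex)) ⟶
        ((⟨p.val⟩ : AugSimplex), (⟨b.len - p.val⟩ : AugSimplex)))) ≫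
    Sigma.ι (sigmaAugSummand A a)
      ⟨sigmaIdx (show Fin a.len →o Fin b.len from β) p.val,
        by have := sigmaIdx_le (show Fin a.len →o Fin b.len from β) p.val; omega⟩

/-!
The left adjoint is computed by an explicit model `b ↦ ∐ᵢ A_{i, b-i-1}`. A map `β : a ⟶ b` acts
on the summand cut after `i` through the decomposition `β = σₐ(β₁, β₂)` with `β₁` landing in
`[i]`; `j_β(i) + 1` is the number of points sent into `[i]`. Everything rests on the uniqueness of
this decomposition: it makes the matrices functorial, and it shows that the summand inclusions
`A_{i,j} ⟶ (model)_{i+1+j}` form a natural transformation `A ⟶ σₐ*(model)`. Every `A ⟶ σₐ*X`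
factors uniquely through it, since a map out of a coproduct is determined by its components. So
the model is left adjoint to `σₐ*`, and `L`, being another left adjoint, is isomorphic to it
compatibly with all structure maps.
-/

instance (a b : AugSimplex) : FunLike (a ⟶ b) (Fin a.len) (Fin b.len) :=
  inferInstanceAs (FunLike (Fin a.len →o Fin b.len) _ _)

namespace AugSimplex

theorem hom_ext {a b : AugSimplex} {f g : a ⟶ b} (h : ∀ i, (f i : ℕ) = g i) : f = g :=
  OrderHom.ext _ _ (funext fun i => Fin.ext (h i))

theorem eq_eqToHom_comp_comp_eqToHom_iff {a a' b b' : AugSimplex} (ha : a = a') (hb : b' = b)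
    (f : a ⟶ b) (g : a' ⟶ b') :
    f = eqToHom ha ≫ g ≫ eqToHom hb ↔
      ∀ (i : Fin a.len) (j : Fin a'.len), (i : ℕ) = j → (f i : ℕ) = g j := by
  subst ha hb
  simp only [eqToHom_refl, Category.comp_id, Category.id_comp]
  exact ⟨fun h i j hij => by rw [h, Fin.ext hij], fun h => hom_ext fun i => h i i rfl⟩

end AugSimplex

theorem sigmaIdx_eq_of_lt_iff {m n : ℕ} (β : Fin m →o Fin n) {p q : ℕ} (hq : q ≤ m)
    (h : ∀ j : Fin m, (j : ℕ) < q ↔ (β j : ℕ) < p) : sigmaIdx β p = q := by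
  have hs := sigmaIdx_le β p
  by_contra hne
  rcases Nat.lt_or_gt_of_ne hne with hlt | hlt
  · exact lt_irrefl _ ((lt_sigmaIdx_iff β p ⟨sigmaIdx β p, by omega⟩).mpr
      ((h ⟨sigmaIdx β p, by omega⟩).mp hlt))
  · exact lt_irrefl q ((h ⟨q, by omega⟩).mpr ((lt_sigmaIdx_iff β p ⟨q, by omega⟩).mp hlt))

theorem ordSumAug_map_apply_of_lt {x y : AugSimplex × AugSimplex} (f : x ⟶ y)
    (i : Fin (ordSumAug.obj x).len) (h : (i : ℕ) < x.1.len) :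
    (ordSumAug.map f i : ℕ) = f.1 ⟨i, h⟩ :=
  congrArg Fin.val (dif_pos h)

theorem ordSumAug_map_apply_of_le {x y : AugSimplex × AugSimplex} (f : x ⟶ y)
    (i : Fin (ordSumAug.obj x).len) (h : x.1.len ≤ (i : ℕ)) :
    (ordSumAug.map f i : ℕ) =
      y.1.len + f.2 ⟨i - x.1.len, by have : (i : ℕ) < x.1.len + x.2.len := i.2; omega⟩ :=
  congrArg Fin.val (dif_neg (not_lt.mpr h))

theorem ordSumAug_map_apply_lt_iff {x y : AugSimplex × AugSimplex} (f : x ⟶ y)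
    (i : Fin (ordSumAug.obj x).len) : (ordSumAug.map f i : ℕ) < y.1.len ↔ (i : ℕ) < x.1.len := by
  rcases lt_or_ge (i : ℕ) x.1.len with h | h
  · simp [ordSumAug_map_apply_of_lt f i h, h]
  · simp [ordSumAug_map_apply_of_le f i h, h]

theorem ordSumAug_obj_mk_sub (b : AugSimplex) (p : Fin (b.len + 1)) :
    ordSumAug.obj (⟨p⟩, ⟨b.len - p⟩) = b :=
  AugSimplex.ext (show (p : ℕ) + (b.len - p) = b.len by omega)

theorem lt_ordSumAug_obj_len_succ (z : AugSimplex × AugSimplex) :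
    z.1.len < (ordSumAug.obj z).len + 1 :=
  Nat.lt_succ_of_le (Nat.le_add_right _ _)

theorem mk_ordSumAug_obj_sub (z : AugSimplex × AugSimplex) :
    ((⟨z.1.len⟩, ⟨(ordSumAug.obj z).len - z.1.len⟩) : AugSimplex × AugSimplex) = z :=
  Prod.ext rfl (AugSimplex.ext (show z.1.len + z.2.len - z.1.len = z.2.len by omega))

/-- `splitIdx β p = j_β(p - 1) + 1`: the summands of `(σₐ)_!A` are indexed by `p = i + 1`. -/
def splitIdx {a b : AugSimplex} (β : a ⟶ b) (p : Fin (b.len + 1)) : Fin (a.len + 1) :=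
  ⟨sigmaIdx (β : Fin a.len →o Fin b.len) p, Nat.lt_succ_of_le (sigmaIdx_le _ _)⟩

def splitHom {a b : AugSimplex} (β : a ⟶ b) (p : Fin (b.len + 1)) :
    ((⟨splitIdx β p⟩, ⟨a.len - splitIdx β p⟩) : AugSimplex × AugSimplex) ⟶
      (⟨p⟩, ⟨b.len - p⟩) :=
  (splitFst (β : Fin a.len →o Fin b.len) p, splitSnd (β : Fin a.len →o Fin b.len) p (by omega))

theorem ordSumAug_map_splitHom_apply {a b : AugSimplex} (β : a ⟶ b) (p : Fin (b.len + 1))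
    (i : Fin (ordSumAug.obj (⟨splitIdx β p⟩, ⟨a.len - splitIdx β p⟩)).len) :
    (ordSumAug.map (splitHom β p) i : ℕ) =
      β ⟨i, by have : (i : ℕ) < splitIdx β p + (a.len - splitIdx β p) := i.2; omega⟩ := by
  have hi : (i : ℕ) < splitIdx β p + (a.len - splitIdx β p) := i.2
  have hs : (splitIdx β p : ℕ) ≤ a.len := by omega
  rcases lt_or_ge (i : ℕ) (splitIdx β p) with h | h
  · rw [ordSumAug_map_apply_of_lt _ _ h]
    rfl
  · rw [ordSumAug_map_apply_of_le _ _ h]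
    have hge := (lt_sigmaIdx_iff (β : Fin a.len →o Fin b.len) p ⟨i, by omega⟩).not.mp
      (not_lt.mpr h)
    show p + ((β ⟨splitIdx β p + (i - splitIdx β p), _⟩ : ℕ) - p) = _
    have e : (⟨splitIdx β p + (i - splitIdx β p), by omega⟩ : Fin a.len) = ⟨i, by omega⟩ :=
      Fin.ext (by simp only; omega)
    rw [e]
    omega

theorem ordSumAug_map_splitHom {a b : AugSimplex} (β : a ⟶ b) (p : Fin (b.len + 1)) :
    ordSumAug.map (splitHom β p) = eqToHom (ordSumAug_obj_mk_sub a (splitIdx β p)) ≫ β ≫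
      eqToHom (ordSumAug_obj_mk_sub b p).symm :=
  (AugSimplex.eq_eqToHom_comp_comp_eqToHom_iff _ _ _ _).mpr fun i j hij => by
    rw [show j = ⟨i, by omega⟩ from Fin.ext hij.symm]
    exact ordSumAug_map_splitHom_apply β p i

theorem splitIdx_eq_of_ordSumAug_map_eq {a b : AugSimplex} (β : a ⟶ b) (p : Fin (b.len + 1))
    (q : Fin (a.len + 1))
    (u : ((⟨q⟩, ⟨a.len - q⟩) : AugSimplex × AugSimplex) ⟶ (⟨p⟩, ⟨b.len - p⟩))
    (hu : ordSumAug.map u = eqToHom (ordSumAug_obj_mk_sub a q) ≫ β ≫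
      eqToHom (ordSumAug_obj_mk_sub b p).symm) :
    splitIdx β p = q := by
  have hval := (AugSimplex.eq_eqToHom_comp_comp_eqToHom_iff _ _ _ _).mp hu
  refine Fin.ext (sigmaIdx_eq_of_lt_iff _ (by omega) fun j => ?_)
  have hj : (j : ℕ) < q + (a.len - q) := by omega
  rw [← hval ⟨j, hj⟩ j rfl]
  exact (ordSumAug_map_apply_lt_iff u ⟨j, hj⟩).symm

section Model

variable [HasColimits C] (A : (AugSimplex × AugSimplex)ᵒᵖ ⥤ C)

/-- `Sigma.ι` (and `Sigma.desc` below) with the summands unfolded, so that rewriting inside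
composites with maps of `A` does not get stuck on `sigmaAugSummand`. -/
noncomputable def sigmaAugι (b : AugSimplex) (p : Fin (b.len + 1)) :
    A.obj (op (⟨p⟩, ⟨b.len - p⟩)) ⟶ ∐ sigmaAugSummand A b :=
  Sigma.ι (sigmaAugSummand A b) p

variable {A} in
theorem sigmaAugι_hom_ext {b : AugSimplex} {T : C} {f g : ∐ sigmaAugSummand A b ⟶ T}
    (h : ∀ p, sigmaAugι A b p ≫ f = sigmaAugι A b p ≫ g) : f = g :=
  Sigma.hom_ext _ _ h

variable {A} in
noncomputable def sigmaAugDesc {b : AugSimplex} {T : C}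
    (f : ∀ p : Fin (b.len + 1), A.obj (op (⟨p⟩, ⟨b.len - p⟩)) ⟶ T) : ∐ sigmaAugSummand A b ⟶ T :=
  Sigma.desc f

variable {A} in
theorem sigmaAugι_desc {b : AugSimplex} {T : C}
    (f : ∀ p : Fin (b.len + 1), A.obj (op (⟨p⟩, ⟨b.len - p⟩)) ⟶ T) (p : Fin (b.len + 1)) :
    sigmaAugι A b p ≫ sigmaAugDesc f = f p :=
  Sigma.ι_desc _ _

theorem sigmaAugι_sigmaAugMatrix {a b : AugSimplex} (β : a ⟶ b) (p : Fin (b.len + 1)) :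
    sigmaAugι A b p ≫ sigmaAugMatrix A β =
      A.map (splitHom β p).op ≫ sigmaAugι A a (splitIdx β p) :=
  Sigma.ι_desc _ _

/-- Uniqueness of the decomposition `β = σₐ(β₁, β₂)`: any decomposition computes the entry. -/
theorem sigmaAugι_sigmaAugMatrix_of_ordSumAug_map_eq {a b : AugSimplex} (β : a ⟶ b)
    (p : Fin (b.len + 1)) (q : Fin (a.len + 1))
    (u : ((⟨q⟩, ⟨a.len - q⟩) : AugSimplex × AugSimplex) ⟶ (⟨p⟩, ⟨b.len - p⟩))
    (hu : ordSumAug.map u = eqToHom (ordSumAug_obj_mk_sub a q) ≫ β ≫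
      eqToHom (ordSumAug_obj_mk_sub b p).symm) :
    sigmaAugι A b p ≫ sigmaAugMatrix A β = A.map u.op ≫ sigmaAugι A a q := by
  obtain rfl := splitIdx_eq_of_ordSumAug_map_eq β p q u hu
  have hval := (AugSimplex.eq_eqToHom_comp_comp_eqToHom_iff _ _ _ _).mp hu
  obtain rfl : u = splitHom β p := by
    refine Prod.ext (AugSimplex.hom_ext fun i => ?_) (AugSimplex.hom_ext fun i => ?_)
    · have hi : (i : ℕ) < splitIdx β p := i.2
      have h := hval ⟨i, by show (i : ℕ) < splitIdx β p + (a.len - splitIdx β p); omega⟩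
        ⟨i, by omega⟩ rfl
      rwa [ordSumAug_map_apply_of_lt _ _ hi] at h
    · have hi : (i : ℕ) < a.len - splitIdx β p := i.2
      have h := hval ⟨splitIdx β p + i,
        by show _ < splitIdx β p + (a.len - splitIdx β p); omega⟩ ⟨splitIdx β p + i, by omega⟩ rfl
      rw [ordSumAug_map_apply_of_le _ _ (Nat.le_add_right _ _)] at h
      simp only [Nat.add_sub_cancel_left, Fin.eta] at h
      show _ = (β ⟨splitIdx β p + i, by omega⟩ : ℕ) - p
      omega
  exact sigmaAugι_sigmaAugMatrix A β p

theorem sigmaAugMatrix_id (b : AugSimplex) : sigmaAugMatrix A (𝟙 b) = 𝟙 _ := by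
  refine sigmaAugι_hom_ext fun p => ?_
  rw [sigmaAugι_sigmaAugMatrix_of_ordSumAug_map_eq A (𝟙 b) p p (𝟙 _) (by simp), op_id, A.map_id,
    Category.id_comp, Category.comp_id]

theorem sigmaAugMatrix_comp {a b c : AugSimplex} (β : a ⟶ b) (γ : b ⟶ c) :
    sigmaAugMatrix A (β ≫ γ) = sigmaAugMatrix A γ ≫ sigmaAugMatrix A β := by
  refine sigmaAugι_hom_ext fun p => ?_
  rw [sigmaAugι_sigmaAugMatrix_of_ordSumAug_map_eq A (β ≫ γ) p (splitIdx β (splitIdx γ p))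
    (splitHom β (splitIdx γ p) ≫ splitHom γ p)
    (by rw [Functor.map_comp, ordSumAug_map_splitHom, ordSumAug_map_splitHom]; simp)]
  rw [← Category.assoc, sigmaAugι_sigmaAugMatrix]
  simp only [Category.assoc, sigmaAugι_sigmaAugMatrix]
  rw [← Category.assoc, ← A.map_comp, op_comp]

-- Reducible for the same reason as `sigmaAugι`.
noncomputable abbrev sigmaAugModel : AugSimplexᵒᵖ ⥤ C where
  obj b := ∐ sigmaAugSummand A b.unop
  map f := sigmaAugMatrix A f.unop
  map_id b := sigmaAugMatrix_id A b.unop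
  map_comp f g := sigmaAugMatrix_comp A g.unop f.unop

noncomputable def sigmaAugUnitApp (z : AugSimplex × AugSimplex) :
    A.obj (op z) ⟶ ∐ sigmaAugSummand A (ordSumAug.obj z) :=
  A.map (eqToHom (mk_ordSumAug_obj_sub z)).op ≫
    sigmaAugι A (ordSumAug.obj z) ⟨z.1.len, lt_ordSumAug_obj_len_succ z⟩

theorem sigmaAugUnitApp_naturality {z z' : AugSimplex × AugSimplex} (w : z' ⟶ z) :
    A.map w.op ≫ sigmaAugUnitApp A z' =
      sigmaAugUnitApp A z ≫ sigmaAugMatrix A (ordSumAug.map w) := by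
  rw [sigmaAugUnitApp, sigmaAugUnitApp, Category.assoc,
    sigmaAugι_sigmaAugMatrix_of_ordSumAug_map_eq A _ _ ⟨z'.1.len, lt_ordSumAug_obj_len_succ z'⟩
      (eqToHom (mk_ordSumAug_obj_sub z') ≫ w ≫ eqToHom (mk_ordSumAug_obj_sub z).symm)
      (by rw [Functor.map_comp, Functor.map_comp, eqToHom_map, eqToHom_map])]
  rw [← Category.assoc, ← Category.assoc, ← A.map_comp, ← A.map_comp, ← op_comp, ← op_comp]
  simp only [Category.assoc, eqToHom_trans, eqToHom_refl, Category.comp_id]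

noncomputable def sigmaAugUnit : A ⟶ ordSumAug.op ⋙ sigmaAugModel A where
  app z := sigmaAugUnitApp A z.unop
  naturality _ _ w := sigmaAugUnitApp_naturality A w.unop

variable {A} in
noncomputable def sigmaAugModelDesc {X : AugSimplexᵒᵖ ⥤ C} (ψ : A ⟶ ordSumAug.op ⋙ X) :
    sigmaAugModel A ⟶ X where
  app b := sigmaAugDesc fun p =>
    ψ.app (op (⟨p⟩, ⟨b.unop.len - p⟩)) ≫ X.map (eqToHom (ordSumAug_obj_mk_sub b.unop p).symm).op
  naturality b b' f := by
    change sigmaAugMatrix A f.unop ≫ sigmaAugDesc _ = sigmaAugDesc _ ≫ X.map f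
    refine sigmaAugι_hom_ext fun p => ?_
    rw [← Category.assoc, sigmaAugι_sigmaAugMatrix, Category.assoc, sigmaAugι_desc,
      ← Category.assoc (sigmaAugι A _ p), sigmaAugι_desc, ← Category.assoc, ψ.naturality]
    change (_ ≫ X.map (ordSumAug.map (splitHom f.unop p)).op) ≫ _ = _
    rw [ordSumAug_map_splitHom]
    simp [eqToHom_map]

variable {A} {X : AugSimplexᵒᵖ ⥤ C}

theorem sigmaAugι_modelDesc_app (ψ : A ⟶ ordSumAug.op ⋙ X) (b : AugSimplex)
    (p : Fin (b.len + 1)) :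
    sigmaAugι A b p ≫ (sigmaAugModelDesc ψ).app (op b) =
      ψ.app (op (⟨p⟩, ⟨b.len - p⟩)) ≫ X.map (eqToHom (ordSumAug_obj_mk_sub b p).symm).op :=
  sigmaAugι_desc _ p

theorem sigmaAugModelDesc_unit_comp (φ : sigmaAugModel A ⟶ X) :
    sigmaAugModelDesc (sigmaAugUnit A ≫ Functor.whiskerLeft ordSumAug.op φ) = φ := by
  ext b : 2
  refine sigmaAugι_hom_ext fun p => ?_
  rw [sigmaAugι_modelDesc_app, NatTrans.comp_app, Functor.whiskerLeft_app, Category.assoc,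
    ← φ.naturality]
  change sigmaAugUnitApp A _ ≫ sigmaAugMatrix A (eqToHom (ordSumAug_obj_mk_sub b.unop p).symm) ≫
    φ.app b = _
  rw [sigmaAugUnitApp, Category.assoc, ← Category.assoc (sigmaAugι _ _ _),
    sigmaAugι_sigmaAugMatrix_of_ordSumAug_map_eq A _ _ p (eqToHom (mk_ordSumAug_obj_sub _).symm)
      (by simp [eqToHom_map])]
  simp only [Category.assoc]
  rw [← A.map_comp_assoc, ← op_comp, eqToHom_trans, eqToHom_refl, op_id, A.map_id,
    Category.id_comp]

theorem sigmaAugUnit_comp_sigmaAugModelDesc (ψ : A ⟶ ordSumAug.op ⋙ X) :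
    sigmaAugUnit A ≫ Functor.whiskerLeft ordSumAug.op (sigmaAugModelDesc ψ) = ψ := by
  ext z
  change sigmaAugUnitApp A z.unop ≫ (sigmaAugModelDesc ψ).app (op (ordSumAug.obj z.unop)) = _
  rw [sigmaAugUnitApp, Category.assoc, sigmaAugι_modelDesc_app, ← Category.assoc, ψ.naturality]
  simp [eqToHom_map]

variable (A X) in
noncomputable def sigmaAugHomEquiv :
    (sigmaAugModel A ⟶ X) ≃ (A ⟶ ordSumAug.op ⋙ X) where
  toFun φ := sigmaAugUnit A ≫ Functor.whiskerLeft ordSumAug.op φ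
  invFun := sigmaAugModelDesc
  left_inv := sigmaAugModelDesc_unit_comp
  right_inv := sigmaAugUnit_comp_sigmaAugModelDesc

end Model

variable (C) in
noncomputable def sigmaAugAdjunction [HasColimits C] :
    Adjunction.leftAdjointOfEquiv (G := (Functor.whiskeringLeft _ _ C).obj ordSumAug.op)
      sigmaAugHomEquiv (fun _ _ _ _ _ => by ext; simp [sigmaAugHomEquiv]) ⊣
    (Functor.whiskeringLeft (AugSimplex × AugSimplex)ᵒᵖ AugSimplexᵒᵖ C).obj ordSumAug.op :=
  Adjunction.adjunctionOfEquivLeft _ _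

/-- **Proposition 2.11 (`sigmaa!`).**
Let `C` be a cocomplete category.  The left adjoint `(σₐ)_!` of the restriction `(σₐ)*` along
the ordinal sum `σₐ : Δₐ × Δₐ ⥤ Δₐ` is given levelwise by
`((σₐ)_!A)ₖ ≅ ∐_{i=−1}^{k} A_{i,k−i−1}`, and for `β : [l] ⟶ [k]` the induced structure map
acts on the `i`-th summand as the structure map of `A` induced by the unique pair
`(β₁, β₂)` with `σₐ(β₁, β₂) = β`, landing in the `j_β(i)`-th summand. -/
theorem leftAdjoint_of_ordinal_sum_restriction
    [HasColimits C]
    (L : ((AugSimplex × AugSimplex)ᵒᵖ ⥤ C) ⥤ (AugSimplexᵒᵖ ⥤ C))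
    (adj : L ⊣ (Functor.whiskeringLeft (AugSimplex × AugSimplex)ᵒᵖ AugSimplexᵒᵖ C).obj ordSumAug.op)
    (A : (AugSimplex × AugSimplex)ᵒᵖ ⥤ C) :
    ∃ e : ∀ b : AugSimplex, (L.obj A).obj (op b) ≅ ∐ sigmaAugSummand A b,
      ∀ (a b : AugSimplex) (β : a ⟶ b),
        (L.obj A).map β.op = (e b).hom ≫ sigmaAugMatrix A β ≫ (e a).inv := by
  let e := (adj.leftAdjointUniq (sigmaAugAdjunction C)).app A
  refine ⟨fun b => e.app (op b), fun a b β => ?_⟩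
  rw [← Category.assoc, Iso.eq_comp_inv]
  exact e.hom.naturality β.op

end OrdSum
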